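/- arXiv:1606.06926 — 2 statements merged into one kernel-verified Lean document; each statement's English description precedes it below -/
import Mathlib

section
/- Let N be a positive integer, let a : ℤ → ℝ satisfy 0 ≤ a_ℓ ≤ 1 for all ℓ, a_ℓ = 1 for ℓ < L, and a_ℓ ≥ 1 - (1/(γN))·∑_{i=1}^{γN} a_{ℓ-i} for all ℓ ≥ L, where γN is a positive integer and √γ N is a positive integer with √γ N ≥ γN. Then the average (1/(√γ N))·∑_{ℓ=L}^{L+√γ N - 1} a_ℓ ≥ 1/2 - √γ/4 - 1/(4√γ N). -/
/-!
Summing the recursion over the block `[L, L + s)` bounds the block sum `S` from below by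
`s - (1/m) ∑_{i=1}^{m} ∑_ℓ a (ℓ - i)`. Each shifted block sum `∑_ℓ a (ℓ - i)` is at most `i + S`,
since the shifted window sticks out of `[L, L + s)` only through `i` rounds before `L`, where
`a ≤ 1`. Hence `s - S ≤ (m + 1)/2 + S`, i.e. `S ≥ s/2 - (m + 1)/4`, and dividing by
`s = √γ N` with `m = √γ s` gives the bound.
-/

open Finset

lemma sum_Icc_one_natCast (m : ℕ) : ∑ i ∈ Icc 1 m, (i : ℝ) = m * (m + 1) / 2 := by
  induction m with
  | zero => simp
  | succ n ih =>
    rw [sum_Icc_succ_top (by omega), ih]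
    push_cast
    ring

section Block

variable {a : ℤ → ℝ} {L : ℤ}

lemma sum_Ico_comp_sub_le (h0 : ∀ ℓ, 0 ≤ a ℓ) (h1 : ∀ ℓ < L, a ℓ ≤ 1) (i s : ℕ) :
    ∑ ℓ ∈ Ico L (L + s), a (ℓ - i) ≤ i + ∑ ℓ ∈ Ico L (L + s), a ℓ := by
  have hshift : ∑ ℓ ∈ Ico L (L + s), a (ℓ - i) = ∑ ℓ ∈ Ico (L - i) (L + s - i), a ℓ := by
    simp only [sub_eq_add_neg, sum_Ico_add']
  have hbefore : ∑ ℓ ∈ Ico (L - i) L, a ℓ ≤ i := by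
    calc ∑ ℓ ∈ Ico (L - i) L, a ℓ ≤ ∑ _ℓ ∈ Ico (L - i) L, (1 : ℝ) :=
          sum_le_sum fun ℓ hℓ => h1 ℓ (mem_Ico.mp hℓ).2
      _ = i := by simp
  calc ∑ ℓ ∈ Ico L (L + s), a (ℓ - i)
      ≤ ∑ ℓ ∈ Ico (L - i) (L + s), a ℓ := by
        rw [hshift]
        exact sum_le_sum_of_subset_of_nonneg (Ico_subset_Ico le_rfl (by omega))
          fun ℓ _ _ => h0 ℓ
    _ = ∑ ℓ ∈ Ico (L - i) L, a ℓ + ∑ ℓ ∈ Ico L (L + s), a ℓ := by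
        rw [← Ico_union_Ico_eq_Ico (b := L) (by omega) (by omega),
          sum_union (Ico_disjoint_Ico_consecutive _ _ _)]
    _ ≤ i + ∑ ℓ ∈ Ico L (L + s), a ℓ := by gcongr

lemma sum_Ico_sum_Icc_comp_sub_le (h0 : ∀ ℓ, 0 ≤ a ℓ) (h1 : ∀ ℓ < L, a ℓ ≤ 1) (m s : ℕ) :
    ∑ ℓ ∈ Ico L (L + s), ∑ i ∈ Icc 1 m, a (ℓ - i) ≤
      m * (m + 1) / 2 + m * ∑ ℓ ∈ Ico L (L + s), a ℓ := by
  rw [sum_comm]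
  calc ∑ i ∈ Icc 1 m, ∑ ℓ ∈ Ico L (L + s), a (ℓ - i)
      ≤ ∑ i ∈ Icc 1 m, ((i : ℝ) + ∑ ℓ ∈ Ico L (L + s), a ℓ) :=
        sum_le_sum fun i _ => sum_Ico_comp_sub_le h0 h1 i s
    _ = m * (m + 1) / 2 + m * ∑ ℓ ∈ Ico L (L + s), a ℓ := by
        rw [sum_add_distrib, sum_Icc_one_natCast, sum_const, Nat.card_Icc, nsmul_eq_mul]
        simp

lemma le_sum_Ico_of_recursion {m : ℕ} (hm : 0 < m) (h0 : ∀ ℓ, 0 ≤ a ℓ)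
    (h1 : ∀ ℓ < L, a ℓ ≤ 1)
    (hrec : ∀ ℓ, L ≤ ℓ → 1 - 1 / (m : ℝ) * ∑ i ∈ Icc 1 m, a (ℓ - i) ≤ a ℓ) (s : ℕ) :
    (s : ℝ) / 2 - (m + 1) / 4 ≤ ∑ ℓ ∈ Ico L (L + s), a ℓ := by
  set S := ∑ ℓ ∈ Ico L (L + s), a ℓ
  set T := ∑ ℓ ∈ Ico L (L + s), ∑ i ∈ Icc 1 m, a (ℓ - i)
  have hm0 : (0 : ℝ) < m := by exact_mod_cast hm
  have hsum : (s : ℝ) - 1 / (m : ℝ) * T ≤ S := by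
    calc (s : ℝ) - 1 / (m : ℝ) * T
        = ∑ ℓ ∈ Ico L (L + s), (1 - 1 / (m : ℝ) * ∑ i ∈ Icc 1 m, a (ℓ - i)) := by
          rw [sum_sub_distrib, ← mul_sum, sum_const, Int.card_Ico]
          simp [T]
      _ ≤ S := sum_le_sum fun ℓ hℓ => hrec ℓ (mem_Ico.mp hℓ).1
  have hT : 1 / (m : ℝ) * T ≤ (m + 1) / 2 + S := by
    calc 1 / (m : ℝ) * T ≤ 1 / (m : ℝ) * (m * (m + 1) / 2 + m * S) := by
          gcongr
          exact sum_Ico_sum_Icc_comp_sub_le h0 h1 m s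
      _ = (m + 1) / 2 + S := by field_simp
  linarith

end Block

theorem average_feasibility_recursion_general
    (γ N : ℝ) (hγ0 : 0 < γ)
    (L : ℤ) (m s : ℕ) (hm : 0 < m) (hs : 0 < s)
    (hmN : (m : ℝ) = γ * N)
    (hsN : (s : ℝ) = Real.sqrt γ * N)
    (a : ℤ → ℝ)
    (hbound : ∀ ℓ : ℤ, 0 ≤ a ℓ ∧ a ℓ ≤ 1)
    (hrec : ∀ ℓ : ℤ, L ≤ ℓ →
      a ℓ ≥ 1 - (1 / (γ * N)) * ∑ i ∈ Finset.Icc 1 m, a (ℓ - (i : ℤ))) :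
    (1 / (Real.sqrt γ * N)) * ∑ ℓ ∈ Finset.Ico L (L + (s : ℤ)), a ℓ ≥
      1 / 2 - Real.sqrt γ / 4 - 1 / (4 * (Real.sqrt γ * N)) := by
  have hkey := le_sum_Ico_of_recursion hm (fun ℓ => (hbound ℓ).1) (fun ℓ _ => (hbound ℓ).2)
    (by rwa [hmN]) s
  have hms : (m : ℝ) = Real.sqrt γ * s := by
    rw [hmN, hsN, ← mul_assoc, Real.mul_self_sqrt hγ0.le]
  have hs0 : (0 : ℝ) < s := by exact_mod_cast hs
  rw [hms] at hkey
  rw [← hsN, ge_iff_le, one_div_mul_eq_div, le_div_iff₀ hs0]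
  calc (1 / 2 - √γ / 4 - 1 / (4 * s)) * s = s / 2 - (√γ * s + 1) / 4 := by field_simp; ring
    _ ≤ _ := hkey

/-- Averaging bound for the feasibility-probability recursion (Lemma 2 core):
if `a ℓ = 1` before round `L` and `a ℓ ≥ 1 - (1/(γN)) ∑_{i=1}^{γN} a_{ℓ-i}`
afterwards, then the average over the block of length `√γ N` is at least
`1/2 - √γ/4 - 1/(4 √γ N)`. -/
theorem average_feasibility_recursion
    (γ N : ℝ) (hγ0 : 0 < γ) (hγ1 : γ < 1) (hN : 0 < N)
    (L : ℤ) (m s : ℕ) (hm : 0 < m) (hs : 0 < s)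
    (hmN : (m : ℝ) = γ * N)
    (hsN : (s : ℝ) = Real.sqrt γ * N)
    (hms : m ≤ s)
    (a : ℤ → ℝ)
    (hbound : ∀ ℓ : ℤ, 0 ≤ a ℓ ∧ a ℓ ≤ 1)
    (hpre : ∀ ℓ : ℤ, ℓ < L → a ℓ = 1)
    (hrec : ∀ ℓ : ℤ, L ≤ ℓ →
      a ℓ ≥ 1 - (1 / (γ * N)) * ∑ i ∈ Finset.Icc 1 m, a (ℓ - (i : ℤ))) :
    (1 / (Real.sqrt γ * N)) * ∑ ℓ ∈ Finset.Ico L (L + (s : ℤ)), a ℓ ≥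
      1 / 2 - Real.sqrt γ / 4 - 1 / (4 * (Real.sqrt γ * N)) :=
  average_feasibility_recursion_general γ N hγ0 L m s hm hs hmN hsN a hbound hrec
end

section
/- Let B, M be positive integers, (C̃_ℓ)_{ℓ} and (F_ℓ)_{ℓ} be sequences of real numbers indexed by integers, with C̃_ℓ ∈ {0,1}, F_ℓ ∈ {0,1}, and F̃_ℓ defined by F̃_ℓ = 1 for ℓ < L and F̃_ℓ = max{0, 1 - (1/B)∑_{i=1}^{M} C̃_{ℓ-i}·F̃_{ℓ-i}} for ℓ ≥ L. Suppose that for all ℓ ≥ L, if ∑_{i=1}^{M} C̃_{ℓ-i}·F_{ℓ-i} < B then F_ℓ = 1 (the feasibility rule). Then for all k ∈ ℤ: ∑_{ℓ=L}^{L+k} C̃_ℓ·F_ℓ ≥ ∑_{ℓ=L}^{L+k} C̃_ℓ·F̃_ℓ (where empty sums are 0 when k < 0). -/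
/-!
Put `D ℓ = C̃_ℓ F_ℓ - C̃_ℓ F̃_ℓ`, which vanishes before `L`. The sum of `D` over the window of the
last `M` rounds is a difference of two prefix sums of `D`. When the true process rejects at `ℓ`,
the window already holds at least `B` actual selections, so the pessimistic `F̃_ℓ` is at most the
positive part of the window sum of `D`; when it accepts, `D ℓ ≥ 0`. In both cases
`D ℓ ≥ -max 0 (window sum)`. Since the window sum is `P (ℓ - 1) - P (ℓ - 1 - M)` for the prefix
sums `P` of `D`, it is at most `P (ℓ - 1)` once earlier prefix sums are nonnegative, so by strong
induction `P ℓ = P (ℓ - 1) + D ℓ ≥ 0`.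
-/

open Finset

def windowSum (M : ℕ) (g : ℤ → ℝ) (ℓ : ℤ) : ℝ := ∑ i ∈ Icc 1 M, g (ℓ - i)

theorem windowSum_sub (M : ℕ) (f g : ℤ → ℝ) (ℓ : ℤ) :
    windowSum M (f - g) ℓ = windowSum M f ℓ - windowSum M g ℓ :=
  sum_sub_distrib _ _

section WindowedPrefixSums

variable {D : ℤ → ℝ} {L : ℤ}

theorem sum_Icc_eq_sum_Icc_sub_one_add (hD : ∀ j < L, D j = 0) (x : ℤ) :
    ∑ j ∈ Icc L x, D j = ∑ j ∈ Icc L (x - 1), D j + D x := by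
  rcases le_or_gt L x with hx | hx
  · rw [← insert_Icc_sub_one_right_eq_Icc hx, sum_insert (by simp), add_comm]
  · rw [Icc_eq_empty_of_lt hx, Icc_eq_empty_of_lt (by omega), hD x hx]
    simp

theorem sum_Icc_sub_one_eq_window_add (hD : ∀ j < L, D j = 0) (M : ℕ) (ℓ : ℤ) :
    ∑ j ∈ Icc L (ℓ - 1), D j =
      windowSum M D ℓ + ∑ j ∈ Icc L (ℓ - 1 - M), D j := by
  unfold windowSum
  induction M with
  | zero => simp
  | succ M ih =>
    rw [sum_Icc_succ_top (by omega), ih, sum_Icc_eq_sum_Icc_sub_one_add hD (ℓ - 1 - M)]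
    push_cast
    ring_nf

theorem sum_Icc_nonneg_of_window (hD : ∀ j < L, D j = 0) (M : ℕ)
    (hstep : ∀ ℓ, L ≤ ℓ → -max 0 (windowSum M D ℓ) ≤ D ℓ) (ℓ : ℤ) :
    0 ≤ ∑ j ∈ Icc L ℓ, D j := by
  suffices h : ∀ n : ℕ, ∀ ℓ < L + n, 0 ≤ ∑ j ∈ Icc L ℓ, D j from
    h (ℓ - L + 1).toNat ℓ (by omega)
  intro n
  induction n with
  | zero => intro ℓ hℓ; simp [Icc_eq_empty_of_lt (show ℓ < L by simpa using hℓ)]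
  | succ n ih =>
    intro ℓ hℓ
    rcases lt_or_ge ℓ (L + n) with h | h
    · exact ih ℓ h
    have hprev := ih (ℓ - 1) (by omega)
    have hfar := ih (ℓ - 1 - M) (by omega)
    have hwindow := sum_Icc_sub_one_eq_window_add hD M ℓ
    have hmax : max 0 (windowSum M D ℓ) ≤ ∑ j ∈ Icc L (ℓ - 1), D j :=
      max_le hprev (by linarith)
    rw [sum_Icc_eq_sum_Icc_sub_one_add hD]
    linarith [hstep ℓ (by omega)]

end WindowedPrefixSums

section PessimisticFeasibility

variable {B M : ℕ} {L ℓ : ℤ} {C F Ftil : ℤ → ℝ}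

theorem pessimistic_nonneg (hFtpre : ∀ ℓ, ℓ < L → Ftil ℓ = 1)
    (hFtrec : ∀ ℓ, L ≤ ℓ → Ftil ℓ = max 0 (1 - (1 / (B : ℝ)) * windowSum M (C * Ftil) ℓ))
    (j : ℤ) : 0 ≤ Ftil j := by
  rcases lt_or_ge j L with hj | hj
  · simp [hFtpre j hj]
  · simp [hFtrec j hj]

theorem pessimistic_le_one (hC : ∀ j, 0 ≤ C j) (hFtpre : ∀ ℓ, ℓ < L → Ftil ℓ = 1)
    (hFtrec : ∀ ℓ, L ≤ ℓ → Ftil ℓ = max 0 (1 - (1 / (B : ℝ)) * windowSum M (C * Ftil) ℓ))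
    (j : ℤ) : Ftil j ≤ 1 := by
  rcases lt_or_ge j L with hj | hj
  · simp [hFtpre j hj]
  · have hwindow : 0 ≤ windowSum M (C * Ftil) j :=
      sum_nonneg fun i _ => mul_nonneg (hC _) (pessimistic_nonneg hFtpre hFtrec _)
    rw [hFtrec j hj]
    exact max_le zero_le_one
      (sub_le_self _ (mul_nonneg (one_div_nonneg.mpr (Nat.cast_nonneg B)) hwindow))

theorem one_sub_div_le_max_zero_sub {B W V : ℝ} (hB : 1 ≤ B) (hW : B ≤ W) :
    1 - (1 / B) * V ≤ max 0 (W - V) := by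
  rcases le_total V W with hVW | hWV
  · calc 1 - (1 / B) * V = (B - V) / B := by field_simp
      _ ≤ (W - V) / B := by gcongr
      _ ≤ W - V := div_le_self (by linarith) hB
      _ ≤ max 0 (W - V) := le_max_right _ _
  · calc 1 - (1 / B) * V = (B - V) / B := by field_simp
      _ ≤ 0 := div_nonpos_of_nonpos_of_nonneg (by linarith) (by linarith)
      _ ≤ max 0 (W - V) := le_max_left _ _

theorem neg_max_windowSum_le_of_feasibility (hB : 1 ≤ (B : ℝ)) (hC0 : 0 ≤ C ℓ) (hC1 : C ℓ ≤ 1)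
    (hF : F ℓ = 0 ∨ F ℓ = 1) (hFt1 : Ftil ℓ ≤ 1)
    (hFtrec : Ftil ℓ = max 0 (1 - (1 / (B : ℝ)) * windowSum M (C * Ftil) ℓ))
    (hfeas : windowSum M (C * F) ℓ < B → F ℓ = 1) :
    -max 0 (windowSum M (C * F - C * Ftil) ℓ) ≤ (C * F - C * Ftil) ℓ := by
  have hFt0 : 0 ≤ Ftil ℓ := hFtrec ▸ le_max_left _ _
  rcases hF with hF0 | hF1
  · have hfull : (B : ℝ) ≤ windowSum M (C * F) ℓ := by
      by_contra! h
      simp [hfeas h] at hF0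
    have hFt : Ftil ℓ ≤ max 0 (windowSum M (C * F - C * Ftil) ℓ) := by
      rw [hFtrec, windowSum_sub]
      exact max_le (le_max_left _ _) (one_sub_div_le_max_zero_sub hB hfull)
    simp only [Pi.sub_apply, Pi.mul_apply, hF0]
    nlinarith
  · have : 0 ≤ (C * F - C * Ftil) ℓ := by
      simp only [Pi.sub_apply, Pi.mul_apply, hF1]
      nlinarith
    linarith [le_max_left 0 (windowSum M (C * F - C * Ftil) ℓ)]

end PessimisticFeasibility

theorem coupling_pointwise_domination_general
    (B M : ℕ) (hB : 0 < B) (L : ℤ)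
    (C F Ftil : ℤ → ℝ)
    (hC : ∀ ℓ, C ℓ = 0 ∨ C ℓ = 1)
    (hF : ∀ ℓ, F ℓ = 0 ∨ F ℓ = 1)
    (hFpre : ∀ ℓ, ℓ < L → F ℓ = 1)
    (hFtpre : ∀ ℓ, ℓ < L → Ftil ℓ = 1)
    (hFtrec : ∀ ℓ, L ≤ ℓ →
      Ftil ℓ = max 0 (1 - (1 / (B : ℝ)) *
        ∑ i ∈ Finset.Icc 1 M, C (ℓ - (i : ℤ)) * Ftil (ℓ - (i : ℤ))))
    (hfeas : ∀ ℓ, L ≤ ℓ →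
      (∑ i ∈ Finset.Icc 1 M, C (ℓ - (i : ℤ)) * F (ℓ - (i : ℤ))) < (B : ℝ) →
      F ℓ = 1) :
    ∀ k : ℤ, ∑ ℓ ∈ Finset.Icc L (L + k), C ℓ * F ℓ ≥
      ∑ ℓ ∈ Finset.Icc L (L + k), C ℓ * Ftil ℓ := by
  intro k
  have hC0 (j : ℤ) : 0 ≤ C j := by rcases hC j with h | h <;> simp [h]
  have hC1 (j : ℤ) : C j ≤ 1 := by rcases hC j with h | h <;> simp [h]
  have hgap := sum_Icc_nonneg_of_window (D := C * F - C * Ftil) (L := L)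
    (fun j hj => by simp [hFpre j hj, hFtpre j hj]) M
    (fun ℓ hℓ => neg_max_windowSum_le_of_feasibility (by exact_mod_cast hB) (hC0 ℓ) (hC1 ℓ) (hF ℓ)
      (pessimistic_le_one hC0 hFtpre hFtrec ℓ) (hFtrec ℓ hℓ) (hfeas ℓ hℓ)) (L + k)
  simpa [sum_sub_distrib] using hgap

/-- Pointwise coupling inequality from the proof of Lemma 2:
`∑_{ℓ=L}^{L+k} C̃_ℓ F_ℓ ≥ ∑_{ℓ=L}^{L+k} C̃_ℓ F̃_ℓ` for all `k ∈ ℤ`. -/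
theorem coupling_pointwise_domination
    (B M : ℕ) (hB : 0 < B) (hM : 0 < M) (L : ℤ)
    (C F Ftil : ℤ → ℝ)
    (hC : ∀ ℓ, C ℓ = 0 ∨ C ℓ = 1)
    (hF : ∀ ℓ, F ℓ = 0 ∨ F ℓ = 1)
    (hFpre : ∀ ℓ, ℓ < L → F ℓ = 1)
    (hFtpre : ∀ ℓ, ℓ < L → Ftil ℓ = 1)
    (hFtrec : ∀ ℓ, L ≤ ℓ →
      Ftil ℓ = max 0 (1 - (1 / (B : ℝ)) *
        ∑ i ∈ Finset.Icc 1 M, C (ℓ - (i : ℤ)) * Ftil (ℓ - (i : ℤ))))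
    (hfeas : ∀ ℓ, L ≤ ℓ →
      (∑ i ∈ Finset.Icc 1 M, C (ℓ - (i : ℤ)) * F (ℓ - (i : ℤ))) < (B : ℝ) →
      F ℓ = 1) :
    ∀ k : ℤ, ∑ ℓ ∈ Finset.Icc L (L + k), C ℓ * F ℓ ≥
      ∑ ℓ ∈ Finset.Icc L (L + k), C ℓ * Ftil ℓ :=
  coupling_pointwise_domination_general B M hB L C F Ftil hC hF hFpre hFtpre hFtrec hfeas
end
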